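/- arXiv:2406.12574 — 3 statements merged into one kernel-verified Lean document; each statement's English description precedes it below -/
import Mathlib

section
/- If a symmetric relation R on the states of a labelled transition system is a weak simulation up to structural congruence (i.e., whenever (S,R')∈R and S makes a labelled transition α to S', there exists R'' such that R' makes a weak α-transition to R'' and S' is related to R'' via ≡∘R∘≡), and ≡ is itself a strong bisimulation contained in weak bisimilarity, then R is contained in weak bisimilarity. -/
def WeakTau {State Label : Type} (step : State → Label → State → Prop) (τ : Label) :
    State → State → Prop :=
  Relation.ReflTransGen (fun s s' => step s τ s')

def WeakStep {State Label : Type} (step : State → Label → State → Prop) (τ : Label)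
    (S : State) (α : Label) (S' : State) : Prop :=
  (α = τ ∧ WeakTau step τ S S') ∨
  (α ≠ τ ∧ ∃ S₁ S₂, WeakTau step τ S S₁ ∧ step S₁ α S₂ ∧ WeakTau step τ S₂ S')

def IsWeakSim {State Label : Type} (step : State → Label → State → Prop) (τ : Label)
    (R : State → State → Prop) : Prop :=
  ∀ S T α S', R S T → step S α S' → ∃ T', WeakStep step τ T α T' ∧ R S' T'

def IsWeakBisim {State Label : Type} (step : State → Label → State → Prop) (τ : Label)
    (R : State → State → Prop) : Prop :=
  Symmetric R ∧ IsWeakSim step τ R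

def WBisim {State Label : Type} (step : State → Label → State → Prop) (τ : Label)
    (S T : State) : Prop :=
  ∃ R, IsWeakBisim step τ R ∧ R S T

def IsStrongSim {State Label : Type} (step : State → Label → State → Prop)
    (R : State → State → Prop) : Prop :=
  ∀ S T α S', R S T → step S α S' → ∃ T', step T α T' ∧ R S' T'

def IsStrongBisim {State Label : Type} (step : State → Label → State → Prop)
    (R : State → State → Prop) : Prop :=
  Symmetric R ∧ IsStrongSim step R

def SBisim {State Label : Type} (step : State → Label → State → Prop)
    (S T : State) : Prop :=
  ∃ R, IsStrongBisim step R ∧ R S T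


lemma eq_lift_tau {State Label : Type} {step : State → Label → State → Prop} {τ : Label}
    {eq : State → State → Prop} (hsim : IsStrongSim step eq) :
    ∀ {B B'}, WeakTau step τ B B' → ∀ {T}, eq B T → ∃ T', WeakTau step τ T T' ∧ eq B' T' := by
  intro B B' h
  induction h with
  | refl => exact fun hBT => ⟨_, Relation.ReflTransGen.refl, hBT⟩
  | tail _ hstep ih =>
    intro T hBT
    obtain ⟨T', hT', hbt⟩ := ih hBT
    obtain ⟨T'', hT'', hbt'⟩ := hsim _ _ _ _ hbt hstep
    exact ⟨T'', hT'.tail hT'', hbt'⟩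

lemma eq_lift_weak {State Label : Type} {step : State → Label → State → Prop} {τ : Label}
    {eq : State → State → Prop} (hsim : IsStrongSim step eq) :
    ∀ {B α B' T}, WeakStep step τ B α B' → eq B T →
      ∃ T', WeakStep step τ T α T' ∧ eq B' T' := by
  intro B α B' T h hBT
  rcases h with ⟨hτ, hw⟩ | ⟨hτ, B₁, B₂, h1, h2, h3⟩
  · obtain ⟨T', hT', he⟩ := eq_lift_tau hsim hw hBT
    exact ⟨T', Or.inl ⟨hτ, hT'⟩, he⟩
  · obtain ⟨T₁, hT1, he1⟩ := eq_lift_tau hsim h1 hBT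
    obtain ⟨T₂, hT2, he2⟩ := hsim _ _ _ _ he1 h2
    obtain ⟨T', hT', he3⟩ := eq_lift_tau hsim h3 he2
    exact ⟨T', Or.inr ⟨hτ, T₁, T₂, hT1, hT2, hT'⟩, he3⟩

theorem upto_sc_sound {State Label : Type}
    (step : State → Label → State → Prop) (τ : Label)
    (eq R : State → State → Prop)
    (heq : Equivalence eq)
    (heqb : IsStrongBisim step eq)
    (heqw : ∀ S T, eq S T → WBisim step τ S T)
    (hsym : Symmetric R)
    (hsim : ∀ S T α S', R S T → step S α S' →
      ∃ T', WeakStep step τ T α T' ∧ ∃ A B, eq S' A ∧ R A B ∧ eq B T') :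
    ∀ S T, R S T → WBisim step τ S T := by
  intro S T hST
  refine ⟨fun S T => ∃ A B, eq S A ∧ R A B ∧ eq B T, ⟨?_, ?_⟩, S, T, heq.refl S, hST, heq.refl T⟩
  · rintro X Y ⟨A, B, h1, h2, h3⟩
    exact ⟨B, A, heq.symm h3, hsym h2, heq.symm h1⟩
  · rintro X Y α X' ⟨A, B, h1, h2, h3⟩ hstep
    obtain ⟨A', hA', he1⟩ := heqb.2 _ _ _ _ h1 hstep
    obtain ⟨B', hB', A'', B'', he2, hR, he3⟩ := hsim _ _ _ _ h2 hA'
    obtain ⟨Y', hY', he4⟩ := eq_lift_weak heqb.2 hB' h3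
    exact ⟨Y', hY', A'', B'', heq.trans he1 he2, hR, heq.trans he3 he4⟩
end

section
/- Weak bisimilarity up to a strong bisimulation equivalence is sound: if R is a symmetric relation such that whenever (S,T)∈R and S →α S', there exists T' with T weakly transitioning by α to T' and (S',T') ∈ ≡∘R∘≡, where ≡ is an equivalence relation that is a strong bisimulation, then ≡∘R∘≡ is a weak bisimulation. -/
lemma strong_weaktau {State Label : Type} {step : State → Label → State → Prop} {τ : Label}
    {eq : State → State → Prop} (hs : IsStrongSim step eq)
    {B B' T : State} (h : WeakTau step τ B B') (he : eq B T) :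
    ∃ T', WeakTau step τ T T' ∧ eq B' T' := by
  induction h with
  | refl => exact ⟨T, Relation.ReflTransGen.refl, he⟩
  | tail _ hstep ih =>
    obtain ⟨T1, htau, he1⟩ := ih
    obtain ⟨T2, hst, he2⟩ := hs _ _ _ _ he1 hstep
    exact ⟨T2, htau.tail hst, he2⟩

lemma strong_weakstep {State Label : Type} {step : State → Label → State → Prop} {τ : Label}
    {eq : State → State → Prop} (hs : IsStrongSim step eq)
    {B B' T : State} {α : Label} (h : WeakStep step τ B α B') (he : eq B T) :
    ∃ T', WeakStep step τ T α T' ∧ eq B' T' := by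
  rcases h with ⟨hα, htau⟩ | ⟨hα, B1, B2, h1, h2, h3⟩
  · obtain ⟨T', ht, he'⟩ := strong_weaktau hs htau he
    exact ⟨T', Or.inl ⟨hα, ht⟩, he'⟩
  · obtain ⟨T1, ht1, he1⟩ := strong_weaktau hs h1 he
    obtain ⟨T2, ht2, he2⟩ := hs _ _ _ _ he1 h2
    obtain ⟨T3, ht3, he3⟩ := strong_weaktau hs h3 he2
    exact ⟨T3, Or.inr ⟨hα, T1, T2, ht1, ht2, ht3⟩, he3⟩

theorem upto_strong_bisim_equiv_sound {State Label : Type}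
    (step : State → Label → State → Prop) (τ : Label)
    (eq R : State → State → Prop)
    (heq : Equivalence eq)
    (heqb : IsStrongBisim step eq)
    (hsym : Symmetric R)
    (hsim : ∀ S T α S', R S T → step S α S' →
      ∃ T', WeakStep step τ T α T' ∧ ∃ A B, eq S' A ∧ R A B ∧ eq B T') :
    IsWeakBisim step τ (fun S T => ∃ A B, eq S A ∧ R A B ∧ eq B T) := by
  constructor
  · rintro S T ⟨A, B, h1, h2, h3⟩
    exact ⟨B, A, heq.symm h3, hsym h2, heq.symm h1⟩
  · rintro S T α S' ⟨A, B, h1, h2, h3⟩ hstep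
    obtain ⟨A', hA', heA⟩ := heqb.2 _ _ _ _ h1 hstep
    obtain ⟨B', hB', A2, B2, e1, r2, e2⟩ := hsim _ _ _ _ h2 hA'
    obtain ⟨T', hT', e3⟩ := strong_weakstep heqb.2 hB' h3
    exact ⟨T', hT', A2, B2, heq.trans heA e1, r2, heq.trans e2 e3⟩
end

section
/- Swapping adjacent restrictions commutes with transitions: for π-calculus-style systems, if (νu)(νv)T →α S', then (νv)(νu)T →α R' for some R' structurally congruent to S', where the derivation of the original transition ends with two applications among the rules RES and OPEN. -/
/-- Systems of a π-calculus-like language with located prefixes. -/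
inductive System where
  | nil : System
  | par : System → System → System
  | nu : ℕ → System → System
  /-- located input prefix `x(u⃗).P` at location `n`: `inp n x u⃗ P` -/
  | inp : ℕ → ℕ → List ℕ → System → System
  /-- located output prefix `x̄⟨u⃗⟩.P` at location `n`: `out n x u⃗ P` -/
  | out : ℕ → ℕ → List ℕ → System → System

/-- Transition labels: τ, input `x(u⃗)@n`, output `(νw⃗)x̄⟨u⃗⟩@n`. -/
inductive PLabel where
  | tau : PLabel
  | inp : ℕ → List ℕ → ℕ → PLabel
  | out : List ℕ → ℕ → List ℕ → ℕ → PLabel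

/-- Free names of a system. -/
def fnSys : System → Finset ℕ
  | .nil => ∅
  | .par P Q => fnSys P ∪ fnSys Q
  | .nu z P => fnSys P \ {z}
  | .inp n x us P => {x, n} ∪ (fnSys P \ us.toFinset)
  | .out n x us P => {x, n} ∪ us.toFinset ∪ fnSys P

/-- Payload names of an input label. -/
def piL : PLabel → Finset ℕ
  | .inp _ us _ => us.toFinset
  | _ => ∅

/-- Extruded (bound-output) names of an output label. -/
def peL : PLabel → Finset ℕ
  | .out ws _ _ _ => ws.toFinset
  | _ => ∅

/-- Free names of a label. -/
def fnL : PLabel → Finset ℕ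
  | .tau => ∅
  | .inp x us n => {x, n} ∪ us.toFinset
  | .out ws x us n => ({x, n} ∪ us.toFinset) \ ws.toFinset

/-- The labelled transition system. -/
inductive Step : System → PLabel → System → Prop
  | out {n x us P} : Step (.out n x us P) (.out [] x us n) P
  | inp {n x us P} : Step (.inp n x us P) (.inp x us n) P
  | parL {P P' Q α} : Step P α P' → Step (.par P Q) α (.par P' Q)
  | parR {P Q Q' α} : Step Q α Q' → Step (.par P Q) α (.par P Q')
  | commL {P P' Q Q' x us n} :
      Step P (.out [] x us n) P' → Step Q (.inp x us n) Q' →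
      Step (.par P Q) .tau (.par P' Q')
  | commR {P P' Q Q' x us n} :
      Step P (.inp x us n) P' → Step Q (.out [] x us n) Q' →
      Step (.par P Q) .tau (.par P' Q')
  | res {z P P' α} : Step P α P' → z ∉ fnL α → Step (.nu z P) α (.nu z P')
  | open_ {z P P' ws x us n} :
      Step P (.out ws x us n) P' → z ∈ us → z ≠ x → z ≠ n → z ∉ ws →
      Step (.nu z P) (.out (z :: ws) x us n) P'

/-- Structural congruence. -/
inductive SC : System → System → Prop
  | refl (P) : SC P P
  | symm {P Q} : SC P Q → SC Q P
  | trans {P Q R} : SC P Q → SC Q R → SC P R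
  | swap (u v P) : SC (.nu u (.nu v P)) (.nu v (.nu u P))
  | gc {z P} : z ∉ fnSys P → SC (.nu z P) P
  | parNil (P) : SC (.par P .nil) P
  | parComm (P Q) : SC (.par P Q) (.par Q P)
  | parAssoc (P Q R) : SC (.par (.par P Q) R) (.par P (.par Q R))
  | ctxPar {P P' Q Q'} : SC P P' → SC Q Q' → SC (.par P Q) (.par P' Q')
  | ctxNu {P P'} (z) : SC P P' → SC (.nu z P) (.nu z P')

/-- Labels identified up to permutation of their extruded name sets. -/
inductive LEq : PLabel → PLabel → Prop
  | tau : LEq .tau .tau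
  | inp (x us n) : LEq (.inp x us n) (.inp x us n)
  | out {ws ws' : List ℕ} (x us n) : ws.Perm ws' →
      LEq (.out ws x us n) (.out ws' x us n)

/-!
The last two rules of the derivation are RES or OPEN, and each combination is replayed in
the opposite order. Two RES steps give `(νv)(νu)T'`, congruent to `(νu)(νv)T'` by the swap
axiom. A mixed pair, RES under OPEN or OPEN under RES, commutes outright to the same state;
if `u = v` the two systems are literally equal. Two OPEN steps reach the same state with the
two extruded names listed in the other order, which the label equivalence absorbs.
-/

lemma LEq.refl : ∀ α : PLabel, LEq α α
  | .tau => .tau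
  | .inp x us n => .inp x us n
  | .out ws x us n => .out x us n (List.Perm.refl ws)

lemma fnL_out_cons (z : ℕ) (ws : List ℕ) (x : ℕ) (us : List ℕ) (n : ℕ) :
    fnL (.out (z :: ws) x us n) = (fnL (.out ws x us n)).erase z := by
  ext w
  simp only [fnL, List.toFinset_cons, Finset.mem_sdiff, Finset.mem_insert, Finset.mem_erase]
  tauto

theorem swap_restrictions_step (u v : ℕ) (T S' : System) (α : PLabel)
    (h : Step (.nu u (.nu v T)) α S') :
    ∃ (β : PLabel) (R' : System),
      Step (.nu v (.nu u T)) β R' ∧ LEq α β ∧ SC S' R' := by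
  cases h with
  | res h hu =>
    cases h with
    | res h hv => exact ⟨_, _, .res (.res h hu) hv, .refl _, .swap _ _ _⟩
    | open_ h hv hvx hvn hvws =>
      by_cases huv : u = v
      · subst huv
        exact ⟨_, _, .res (.open_ h hv hvx hvn hvws) hu, .refl _, .refl _⟩
      · rw [fnL_out_cons, Finset.mem_erase, not_and] at hu
        exact ⟨_, _, .open_ (.res h (hu huv)) hv hvx hvn hvws, .refl _, .refl _⟩
  | @open_ _ _ _ ws x us n h hu hux hun huws =>
    cases h with
    | res h hv =>
      have hv' : v ∉ fnL (.out (u :: ws) x us n) := by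
        rw [fnL_out_cons]
        exact mt Finset.mem_of_mem_erase hv
      exact ⟨_, _, .res (.open_ h hu hux hun huws) hv', .refl _, .refl _⟩
    | open_ h hv hvx hvn hvws =>
      rw [List.mem_cons, not_or] at huws
      have hvws' : v ∉ u :: _ := List.not_mem_cons_of_ne_of_not_mem (Ne.symm huws.1) hvws
      exact ⟨_, _, .open_ (.open_ h hu hux hun huws.2) hv hvx hvn hvws',
        .out _ _ _ (.swap _ _ _), .refl _⟩
end
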